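/- Let h, A, D : ℝ → ℝ be twice continuously differentiable on a neighborhood of L^sec ∈ ℝ with h'(L^sec) = 0, h''(L^sec) < 0, A(L^sec) > 0 and D'(L^sec) < 0, and let σ₀, φ ∈ ℝ satisfy cos(σ₀ − φ) = −1 (so that the corresponding equilibrium of the conservative toy model is a saddle). Then there exist ε₀ > 0 and c > 0 such that for every ε ∈ (0, ε₀) and every η ∈ (0, c ε), the dissipative toy model dσ/dt = h'(L) + ε A'(L) cos(σ − φ), dL/dt = ε A(L) sin(σ − φ) − η D(L) has an equilibrium point (σ_d, L_d) near (σ₀, L^sec) at which the Jacobian matrix J_D of the vector field satisfies det(J_D) < 0; consequently J_D has two nonzero real eigenvalues of opposite sign, i.e. the equilibrium is a saddle. -/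

import Mathlib

/-! The equilibrium equations force `sin (σ - φ) = η D(L) / (ε A(L)) = O(η / ε)`, so
`σ = σ₀ - arcsin (η D / (ε A))` stays close to `σ₀` with `cos (σ - φ) ≈ -1`, and what remains is
the scalar equation `h'(L) = ε A'(L) √(1 - sin² (σ - φ))`. Since `h'' < 0` near `L^sec`, `h'` drops
by a definite amount across an interval of width `O(ε)` around `L^sec`, and the intermediate value
theorem gives a root `L_d`. There `det J_D = ε A(L_d) h''(L_d) |cos (σ_d - φ)| + O(ε²)`
(using `η < ε`), which is negative for small `ε`; a real `2 × 2` matrix with negative determinant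
has one positive and one negative eigenvalue. -/

open Real Set Matrix Topology Metric Polynomial

theorem Real.abs_arcsin_le_pi_div_two_mul_abs (x : ℝ) : |arcsin x| ≤ π / 2 * |x| := by
  have h_abs : |arcsin x| ≤ π / 2 :=
    abs_le.2 ⟨neg_pi_div_two_le_arcsin x, arcsin_le_pi_div_two x⟩
  rcases le_or_gt |x| 1 with hx | hx
  · have h := mul_abs_le_abs_sin h_abs
    rw [sin_arcsin (abs_le.1 hx).1 (abs_le.1 hx).2, div_mul_eq_mul_div, div_le_iff₀ pi_pos] at h
    linarith
  · exact h_abs.trans (le_mul_of_one_le_right (by positivity) hx.le)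

theorem Real.sin_cos_sub_arcsin_of_cos_eq_neg_one {x s : ℝ} (hx : cos x = -1) (hs : |s| ≤ 1) :
    sin (x - arcsin s) = s ∧ cos (x - arcsin s) = -√(1 - s ^ 2) := by
  have hsin : sin x = 0 := sin_eq_zero_iff_cos_eq.2 (Or.inr hx)
  rw [sin_sub, cos_sub, sin_arcsin (abs_le.1 hs).1 (abs_le.1 hs).2, cos_arcsin, hsin, hx]
  constructor <;> ring

theorem exists_quadratic_roots_pos_neg {t d : ℝ} (hd : d < 0) :
    ∃ x y : ℝ, 0 < x ∧ y < 0 ∧ ∀ z, z ^ 2 - t * z + d = 0 ↔ z = x ∨ z = y := by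
  set s := √(discrim 1 (-t) d)
  have hdisc : discrim 1 (-t) d = s * s := (mul_self_sqrt (by rw [discrim]; nlinarith)).symm
  have hts : |t| < s := by
    rw [← sqrt_sq_eq_abs]
    exact sqrt_lt_sqrt (sq_nonneg t) (by rw [discrim]; linarith)
  refine ⟨(t + s) / 2, (t - s) / 2, by linarith [neg_abs_le t], by linarith [le_abs_self t],
    fun z => ?_⟩
  have := quadratic_eq_zero_iff one_ne_zero hdisc z
  simp only [neg_neg, mul_one, one_mul] at this
  rw [← this]
  constructor <;> intro h <;> linear_combination h

theorem Matrix.exists_spectrum_eq_pair_of_det_neg {M : Matrix (Fin 2) (Fin 2) ℝ} (hM : M.det < 0) :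
    ∃ x y : ℝ, 0 < x ∧ y < 0 ∧ spectrum ℝ M = {x, y} := by
  obtain ⟨x, y, hx, hy, hroots⟩ := exists_quadratic_roots_pos_neg (t := M.trace) hM
  refine ⟨x, y, hx, hy, Set.ext fun z => ?_⟩
  rw [mem_spectrum_iff_isRoot_charpoly, charpoly_fin_two, IsRoot.def]
  simpa using hroots z

theorem exists_mem_Icc_eq_of_deriv_le_neg {f g : ℝ → ℝ} {x₀ δ β : ℝ} (hδ : 0 ≤ δ)
    (hf : ∀ x ∈ Icc (x₀ - δ) (x₀ + δ), DifferentiableAt ℝ f x)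
    (hf' : ∀ x ∈ Icc (x₀ - δ) (x₀ + δ), deriv f x ≤ -β) (hfx₀ : f x₀ = 0)
    (hg : ContinuousOn g (Icc (x₀ - δ) (x₀ + δ)))
    (hgb : ∀ x ∈ Icc (x₀ - δ) (x₀ + δ), |g x| ≤ β * δ) :
    ∃ x ∈ Icc (x₀ - δ) (x₀ + δ), f x = g x := by
  have hcont : ContinuousOn f (Icc (x₀ - δ) (x₀ + δ)) :=
    fun x hx => (hf x hx).continuousAt.continuousWithinAt
  have hmvt := (convex_Icc (x₀ - δ) (x₀ + δ)).image_sub_le_mul_sub_of_deriv_le hcont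
    (fun x hx => (hf x (interior_subset hx)).differentiableWithinAt)
    (fun x hx => hf' x (interior_subset hx))
  have hx₀ : x₀ ∈ Icc (x₀ - δ) (x₀ + δ) := ⟨by linarith, by linarith⟩
  have hleft : x₀ - δ ∈ Icc (x₀ - δ) (x₀ + δ) := ⟨le_rfl, by linarith⟩
  have hright : x₀ + δ ∈ Icc (x₀ - δ) (x₀ + δ) := ⟨by linarith, le_rfl⟩
  have hdrop := hmvt x₀ hx₀ (x₀ + δ) hright (by linarith)
  have hrise := hmvt (x₀ - δ) hleft x₀ hx₀ (by linarith)
  obtain ⟨x, hx, hfgx⟩ := intermediate_value_Icc' (by linarith) (hcont.sub hg)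
    (show (0 : ℝ) ∈ Icc (f (x₀ + δ) - g (x₀ + δ)) (f (x₀ - δ) - g (x₀ - δ)) by
      constructor <;> linarith [abs_le.1 (hgb _ hleft), abs_le.1 (hgb _ hright)])
  exact ⟨x, hx, sub_eq_zero.1 hfgx⟩

/-- The Jacobian `J_D` of the dissipative toy model at `(σ, L)`, with `h'` in place of `deriv h`. -/
noncomputable def toyJacobian (h' A D : ℝ → ℝ) (φ ε η σ L : ℝ) : Matrix (Fin 2) (Fin 2) ℝ :=
  !![deriv (fun σ => h' L + ε * deriv A L * cos (σ - φ)) σ,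
     deriv (fun L => h' L + ε * deriv A L * cos (σ - φ)) L;
     deriv (fun σ => ε * A L * sin (σ - φ) - η * D L) σ,
     deriv (fun L => ε * A L * sin (σ - φ) - η * D L) L]

theorem det_toyJacobian {h' A D : ℝ → ℝ} {φ ε η σ L : ℝ} (hh' : DifferentiableAt ℝ h' L)
    (hA : DifferentiableAt ℝ A L) (hA' : DifferentiableAt ℝ (deriv A) L)
    (hD : DifferentiableAt ℝ D L) :
    (toyJacobian h' A D φ ε η σ L).det =
      -(ε * deriv A L * sin (σ - φ)) * (ε * deriv A L * sin (σ - φ) - η * deriv D L) -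
        (deriv h' L + ε * deriv (deriv A) L * cos (σ - φ)) * (ε * A L * cos (σ - φ)) := by
  have hθ : HasDerivAt (fun σ : ℝ => σ - φ) 1 σ := (hasDerivAt_id σ).sub_const φ
  have e₁₁ := ((hθ.cos.const_mul (ε * deriv A L)).const_add (h' L)).deriv
  have e₁₂ := (hh'.hasDerivAt.fun_add ((hA'.hasDerivAt.const_mul ε).mul_const (cos (σ - φ)))).deriv
  have e₂₁ := ((hθ.sin.const_mul (ε * A L)).sub_const (η * D L)).deriv
  have e₂₂ := (((hA.hasDerivAt.const_mul ε).mul_const (sin (σ - φ))).fun_sub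
    (hD.hasDerivAt.const_mul η)).deriv
  rw [toyJacobian, det_fin_two_of, e₁₁, e₁₂, e₂₁, e₂₂]
  ring

/-- The right-hand side of `det_toyJacobian` with `a = A`, `a₁ = A'`, `a₂ = A''`, `d₁ = D'`,
`k = h''`, `s = sin (σ - φ)`, `c = cos (σ - φ)`: its leading term `-ε a c k ≤ -ε m β / 2`
beats the `O(ε²)` remainder. -/
theorem toy_det_neg_of_bounds {ε η β m M a a₁ a₂ d₁ k s c : ℝ}
    (hε : 0 < ε) (hη : 0 ≤ η) (hηε : η ≤ ε)
    (hm : 0 < m) (hk : k ≤ -β) (ha : m ≤ a) (ha_le : |a| ≤ M) (ha₁ : |a₁| ≤ M) (ha₂ : |a₂| ≤ M)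
    (hd₁ : |d₁| ≤ M) (hs : |s| ≤ 1) (hc : -1 ≤ c) (hc' : c ≤ -1 / 2)
    (hsmall : 4 * ε * M ^ 2 < m * β) :
    -(ε * a₁ * s) * (ε * a₁ * s - η * d₁) - (k + ε * a₂ * c) * (ε * a * c) < 0 := by
  have hM : 0 ≤ M := (abs_nonneg a).trans ha_le
  have hβ : 0 < β := pos_of_mul_pos_right (by nlinarith) hm.le
  have hlead : m * β / 2 ≤ a * c * k := by
    calc m * β / 2 = m * (1 / 2) * β := by ring
      _ ≤ a * -c * -k := by gcongr <;> nlinarith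
      _ = a * c * k := by ring
  have h₁ : |a₁ * s * d₁| ≤ M ^ 2 := by
    calc |a₁ * s * d₁| = |a₁| * |s| * |d₁| := by rw [abs_mul, abs_mul]
      _ ≤ M * 1 * M := by gcongr
      _ = M ^ 2 := by ring
  have h₂ : |a * a₂ * c ^ 2| ≤ M ^ 2 := by
    calc |a * a₂ * c ^ 2| = |a| * |a₂| * |c| ^ 2 := by rw [abs_mul, abs_mul, abs_pow]
      _ ≤ M * M * 1 ^ 2 := by gcongr; exact abs_le.2 ⟨hc, by linarith⟩
      _ = M ^ 2 := by ring
  have hcross : η * (a₁ * s * d₁) ≤ ε * M ^ 2 :=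
    calc η * (a₁ * s * d₁) ≤ η * M ^ 2 := mul_le_mul_of_nonneg_left ((le_abs_self _).trans h₁) hη
      _ ≤ ε * M ^ 2 := by gcongr
  have hquad : -(M ^ 2) ≤ a * a₂ * c ^ 2 := (abs_le.1 h₂).1
  nlinarith [sq_nonneg (ε * a₁ * s), mul_le_mul_of_nonneg_left hcross hε.le,
    mul_le_mul_of_nonneg_left hquad (mul_pos hε hε).le, mul_le_mul_of_nonneg_left hlead hε.le]

structure ToyModelBounds (h' A D : ℝ → ℝ) (s : Set ℝ) (β m M : ℝ) : Prop where
  differentiableAt_h' : ∀ L ∈ s, DifferentiableAt ℝ h' L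
  differentiableAt_A : ∀ L ∈ s, DifferentiableAt ℝ A L
  differentiableAt_deriv_A : ∀ L ∈ s, DifferentiableAt ℝ (deriv A) L
  differentiableAt_D : ∀ L ∈ s, DifferentiableAt ℝ D L
  deriv_h'_le : ∀ L ∈ s, deriv h' L ≤ -β
  le_A : ∀ L ∈ s, m ≤ A L
  abs_A_le : ∀ L ∈ s, |A L| ≤ M
  abs_deriv_A_le : ∀ L ∈ s, |deriv A L| ≤ M
  abs_deriv_deriv_A_le : ∀ L ∈ s, |deriv (deriv A) L| ≤ M
  abs_D_le : ∀ L ∈ s, |D L| ≤ M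
  abs_deriv_D_le : ∀ L ∈ s, |deriv D L| ≤ M

section ContDiffAt

variable {𝕜 F : Type*} [NontriviallyNormedField 𝕜] [NormedAddCommGroup F] [NormedSpace 𝕜 F]
  {f : 𝕜 → F} {x : 𝕜}

theorem ContDiffAt.differentiableAt_deriv (hf : ContDiffAt 𝕜 2 f x) :
    DifferentiableAt 𝕜 (deriv f) x :=
  (hf.derivWithin (m := 1) le_rfl).differentiableAt one_ne_zero

theorem ContDiffAt.continuousAt_deriv_deriv (hf : ContDiffAt 𝕜 2 f x) :
    ContinuousAt (deriv (deriv f)) x :=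
  ((hf.derivWithin (m := 1) le_rfl).derivWithin (m := 0) le_rfl).continuousAt

end ContDiffAt

theorem exists_toyModelBounds {h A D : ℝ → ℝ} {L₀ : ℝ} (hh : ContDiffAt ℝ 2 h L₀)
    (hA : ContDiffAt ℝ 2 A L₀) (hD : ContDiffAt ℝ 2 D L₀) (hconc : deriv (deriv h) L₀ < 0)
    (hApos : 0 < A L₀) :
    ∃ r > 0, ∃ β > 0, ∃ m > 0, ∃ M > 0,
      ToyModelBounds (deriv h) A D (Icc (L₀ - r) (L₀ + r)) β m M := by
  set Φ : ℝ → ℝ := fun L =>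
    |A L| + |deriv A L| + |deriv (deriv A) L| + |D L| + |deriv D L|
  have hΦ_cont : ContinuousAt Φ L₀ := by
    have := hA.continuousAt
    have := hA.differentiableAt_deriv.continuousAt
    have := hA.continuousAt_deriv_deriv
    have := hD.continuousAt
    have := hD.differentiableAt_deriv.continuousAt
    fun_prop
  have hev : ∀ᶠ L in 𝓝 L₀, ContDiffAt ℝ 2 h L ∧ ContDiffAt ℝ 2 A L ∧ ContDiffAt ℝ 2 D L ∧
      deriv (deriv h) L < deriv (deriv h) L₀ / 2 ∧ A L₀ / 2 < A L ∧ Φ L < Φ L₀ + 1 :=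
    (hh.eventually (by simp)).and <| (hA.eventually (by simp)).and <|
      (hD.eventually (by simp)).and <|
      (hh.continuousAt_deriv_deriv.eventually_lt continuousAt_const (by linarith)).and <|
      (continuousAt_const.eventually_lt hA.continuousAt (by linarith)).and <|
      hΦ_cont.eventually_lt continuousAt_const (lt_add_one _)
  obtain ⟨r, hr, hball⟩ := nhds_basis_closedBall.eventually_iff.1 hev
  refine ⟨r, hr, -deriv (deriv h) L₀ / 2, by linarith, A L₀ / 2, by linarith, Φ L₀ + 1,
    by positivity, ?_⟩
  rw [← closedBall_eq_Icc]
  have hΦ_le : ∀ L ∈ closedBall L₀ r, Φ L ≤ Φ L₀ + 1 := fun L hL => (hball hL).2.2.2.2.2.le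
  refine ⟨fun L hL => (hball hL).1.differentiableAt_deriv,
    fun L hL => (hball hL).2.1.differentiableAt (by norm_num),
    fun L hL => (hball hL).2.1.differentiableAt_deriv,
    fun L hL => (hball hL).2.2.1.differentiableAt (by norm_num),
    fun L hL => by linarith [(hball hL).2.2.2.1], fun L hL => (hball hL).2.2.2.2.1.le,
    ?_, ?_, ?_, ?_, ?_⟩ <;>
  intro L hL <;> linarith [hΦ_le L hL, abs_nonneg (A L), abs_nonneg (deriv A L),
    abs_nonneg (deriv (deriv A) L), abs_nonneg (D L), abs_nonneg (deriv D L)]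

namespace ToyModelBounds

variable {h' A D : ℝ → ℝ} {s : Set ℝ} {L₀ r β m M : ℝ}

theorem det_toyJacobian_neg (hb : ToyModelBounds h' A D s β m M) {φ ε η σ L : ℝ} (hL : L ∈ s)
    (hm : 0 < m) (hε : 0 < ε) (hη : 0 ≤ η) (hηε : η ≤ ε) (hsmall : 4 * ε * M ^ 2 < m * β)
    (hcos : cos (σ - φ) ≤ -1 / 2) :
    (toyJacobian h' A D φ ε η σ L).det < 0 := by
  rw [det_toyJacobian (hb.differentiableAt_h' L hL) (hb.differentiableAt_A L hL)
    (hb.differentiableAt_deriv_A L hL) (hb.differentiableAt_D L hL)]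
  exact toy_det_neg_of_bounds hε hη hηε hm (hb.deriv_h'_le L hL) (hb.le_A L hL) (hb.abs_A_le L hL)
    (hb.abs_deriv_A_le L hL) (hb.abs_deriv_deriv_A_le L hL) (hb.abs_deriv_D_le L hL)
    (abs_sin_le_one _) (neg_one_le_cos _) hcos hsmall

theorem exists_equilibrium (hb : ToyModelBounds h' A D s β m M) {δ σ₀ φ ε η : ℝ}
    (hs : Icc (L₀ - δ) (L₀ + δ) ⊆ s) (hm : 0 < m) (hh' : h' L₀ = 0) (hcos : cos (σ₀ - φ) = -1)
    (hε : 0 < ε) (hη : 0 ≤ η) (hδ : 0 ≤ δ) (hεδ : ε * M ≤ β * δ) (hηM : 2 * η * M ≤ ε * m) :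
    ∃ σ L, L ∈ Icc (L₀ - δ) (L₀ + δ) ∧
      h' L + ε * deriv A L * cos (σ - φ) = 0 ∧ ε * A L * sin (σ - φ) - η * D L = 0 ∧
      |σ - σ₀| ≤ π / 2 * (M / m * (η / ε)) ∧ cos (σ - φ) ≤ -1 / 2 := by
  set I := Icc (L₀ - δ) (L₀ + δ)
  have hεA : ∀ L ∈ I, 0 < ε * A L := fun L hL => mul_pos hε (hm.trans_le (hb.le_A L (hs hL)))
  have hsin_le : ∀ L ∈ I, |η * D L / (ε * A L)| ≤ M / m * (η / ε) := by
    intro L hL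
    rw [abs_div, abs_mul, abs_of_pos (hεA L hL), abs_of_nonneg hη,
      show M / m * (η / ε) = η * M / (ε * m) by field_simp]
    have hD := hb.abs_D_le L (hs hL)
    exact div_le_div₀ (mul_nonneg hη ((abs_nonneg _).trans hD)) (by gcongr) (mul_pos hε hm)
      (by gcongr; exact hb.le_A L (hs hL))
  have hsin_small : M / m * (η / ε) ≤ 1 / 2 := by
    rw [show M / m * (η / ε) = η * M / (ε * m) by field_simp, div_le_iff₀ (by positivity)]
    linarith
  obtain ⟨L, hL, hh'L⟩ := exists_mem_Icc_eq_of_deriv_le_neg hδ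
    (fun L hL => hb.differentiableAt_h' L (hs hL)) (fun L hL => hb.deriv_h'_le L (hs hL)) hh'
    (g := fun L => ε * deriv A L * √(1 - (η * D L / (ε * A L)) ^ 2))
    (fun L hL => by
      have := (hb.differentiableAt_A L (hs hL)).continuousAt
      have := (hb.differentiableAt_deriv_A L (hs hL)).continuousAt
      have := (hb.differentiableAt_D L (hs hL)).continuousAt
      have := (hεA L hL).ne'
      exact ContinuousAt.continuousWithinAt (by fun_prop (disch := assumption)))
    (fun L hL => calc
      _ = ε * |deriv A L| * √(1 - (η * D L / (ε * A L)) ^ 2) := by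
        rw [abs_mul, abs_mul, abs_of_pos hε, abs_of_nonneg (sqrt_nonneg _)]
      _ ≤ ε * M * 1 := by
        have hA' := hb.abs_deriv_A_le L (hs hL)
        exact mul_le_mul (by gcongr) (sqrt_le_one.2 (by nlinarith)) (sqrt_nonneg _)
          (mul_nonneg hε.le ((abs_nonneg _).trans hA'))
      _ ≤ β * δ := by linarith)
  set S := η * D L / (ε * A L)
  have hS : |S| ≤ 1 / 2 := (hsin_le L hL).trans hsin_small
  obtain ⟨hsin, hcos'⟩ := sin_cos_sub_arcsin_of_cos_eq_neg_one hcos (by linarith)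
  rw [sub_right_comm] at hsin hcos'
  refine ⟨σ₀ - arcsin S, L, hL, ?_, ?_, ?_, ?_⟩
  · rw [hcos']
    linear_combination hh'L
  · rw [hsin, mul_div_cancel₀ _ (hεA L hL).ne', sub_self]
  · rw [sub_sub_cancel_left, abs_neg]
    exact (abs_arcsin_le_pi_div_two_mul_abs S).trans (by gcongr; exact hsin_le L hL)
  · have hsqrt : 1 / 2 ≤ √(1 - S ^ 2) := (le_sqrt' (by norm_num)).2 (by nlinarith [abs_le.1 hS])
    linarith

theorem exists_saddle_equilibrium (hb : ToyModelBounds h' A D (Icc (L₀ - r) (L₀ + r)) β m M)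
    {σ₀ φ ε η : ℝ} (hr : 0 ≤ r) (hβ : 0 < β) (hm : 0 < m) (hh' : h' L₀ = 0)
    (hcos : cos (σ₀ - φ) = -1)
    (hε : 0 < ε) (hη : 0 ≤ η) (hεr : ε * M ≤ β * r) (hεM : 4 * ε * M ^ 2 < m * β)
    (hηM : 2 * η * M ≤ ε * m) :
    ∃ σ L, h' L + ε * deriv A L * cos (σ - φ) = 0 ∧ ε * A L * sin (σ - φ) - η * D L = 0 ∧
      |L - L₀| ≤ M / β * ε ∧ |σ - σ₀| ≤ 2 * M / m * (η / ε) ∧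
      (toyJacobian h' A D φ ε η σ L).det < 0 := by
  have hL₀ : L₀ ∈ Icc (L₀ - r) (L₀ + r) := ⟨by linarith, by linarith⟩
  have hmM : m ≤ M := ((hb.le_A L₀ hL₀).trans (le_abs_self _)).trans (hb.abs_A_le L₀ hL₀)
  have hM : 0 < M := hm.trans_le hmM
  have hηε : η ≤ ε := by nlinarith
  have hδ : 0 ≤ M / β * ε := by positivity
  have hIcc : Icc (L₀ - M / β * ε) (L₀ + M / β * ε) ⊆ Icc (L₀ - r) (L₀ + r) := by
    have : M / β * ε ≤ r := by rw [div_mul_eq_mul_div, div_le_iff₀ hβ]; linarith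
    exact Icc_subset_Icc (by linarith) (by linarith)
  obtain ⟨σ, L, hL, hσ_eq, hL_eq, hσ, hcos'⟩ := hb.exists_equilibrium hIcc hm hh' hcos hε hη hδ
    (by field_simp; rfl) hηM
  refine ⟨σ, L, hσ_eq, hL_eq, abs_sub_le_iff.2 ⟨by linarith [hL.2], by linarith [hL.1]⟩, ?_,
    hb.det_toyJacobian_neg (hIcc hL) hm hε hη hηε hεM hcos'⟩
  calc |σ - σ₀| ≤ π / 2 * (M / m * (η / ε)) := hσ
    _ ≤ 2 * (M / m * (η / ε)) := by gcongr; linarith [pi_le_four]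
    _ = 2 * M / m * (η / ε) := by ring

end ToyModelBounds

theorem dissipative_saddle_remains_saddle_general
    (h A D : ℝ → ℝ) (Lsec σ₀ φ : ℝ)
    (hh : ContDiffAt ℝ 2 h Lsec) (hA : ContDiffAt ℝ 2 A Lsec)
    (hD : ContDiffAt ℝ 2 D Lsec)
    (hcrit : deriv h Lsec = 0) (hconc : deriv (deriv h) Lsec < 0)
    (hApos : 0 < A Lsec)
    (hcos : Real.cos (σ₀ - φ) = -1) :
    ∃ ε₀ > (0:ℝ), ∃ c > (0:ℝ), ∃ C > (0:ℝ),
      ∀ ε : ℝ, 0 < ε → ε < ε₀ → ∀ η : ℝ, 0 < η → η < c * ε →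
        ∃ σd Ld : ℝ,
          deriv h Ld + ε * deriv A Ld * Real.cos (σd - φ) = 0 ∧
          ε * A Ld * Real.sin (σd - φ) - η * D Ld = 0 ∧
          |Ld - Lsec| ≤ C * ε ∧ |σd - σ₀| ≤ C * η / ε ∧
          ∀ JD : Matrix (Fin 2) (Fin 2) ℝ,
            JD = !![deriv (fun σ => deriv h Ld + ε * deriv A Ld * Real.cos (σ - φ)) σd,
                    deriv (fun L => deriv h L + ε * deriv A L * Real.cos (σd - φ)) Ld;
                    deriv (fun σ => ε * A Ld * Real.sin (σ - φ) - η * D Ld) σd,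
                    deriv (fun L => ε * A L * Real.sin (σd - φ) - η * D L) Ld] →
            JD.det < 0 ∧
            ∃ x y : ℝ, 0 < x ∧ y < 0 ∧ spectrum ℝ JD = {x, y} := by
  obtain ⟨r, hr, β, hβ, m, hm, M, hM, hb⟩ := exists_toyModelBounds hh hA hD hconc hApos
  refine ⟨min (β * r / M) (m * β / (4 * M ^ 2)), by positivity, m / (2 * M), by positivity,
    M / β + 2 * M / m, by positivity, fun ε hε hε₀ η hη hηc => ?_⟩
  obtain ⟨hεr, hεM⟩ := lt_min_iff.1 hε₀
  rw [lt_div_iff₀ hM] at hεr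
  rw [lt_div_iff₀ (by positivity)] at hεM
  rw [div_mul_eq_mul_div, lt_div_iff₀ (by positivity)] at hηc
  obtain ⟨σd, Ld, hσ_eq, hL_eq, hL, hσ, hdet⟩ :=
    hb.exists_saddle_equilibrium hr.le hβ hm hcrit hcos hε hη.le hεr.le (by linarith) (by linarith)
  refine ⟨σd, Ld, hσ_eq, hL_eq, hL.trans ?_, hσ.trans ?_, fun JD hJD => ?_⟩
  · gcongr
    exact le_add_of_nonneg_right (by positivity)
  · rw [mul_div_assoc (M / β + 2 * M / m)]
    gcongr
    exact le_add_of_nonneg_left (by positivity)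
  · subst hJD
    exact ⟨hdet, exists_spectrum_eq_pair_of_det_neg hdet⟩

/-- Saddle case of the paper's Theorem 2: a saddle of the conservative toy
model (`cos (σ₀ - φ) = -1`, `h''(Lsec) < 0`, `A(Lsec) > 0`) remains, for
`0 < η < c ε` with `ε` small and `D'(Lsec) < 0`, an equilibrium `(σ_d, L_d)`
of the dissipative toy model near `(σ₀, Lsec)` at which the Jacobian `J_D`
satisfies `det J_D < 0`, hence has two nonzero real eigenvalues of opposite
sign: a saddle. -/
theorem dissipative_saddle_remains_saddle
    (h A D : ℝ → ℝ) (Lsec σ₀ φ : ℝ)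
    (hh : ContDiffAt ℝ 2 h Lsec) (hA : ContDiffAt ℝ 2 A Lsec)
    (hD : ContDiffAt ℝ 2 D Lsec)
    (hcrit : deriv h Lsec = 0) (hconc : deriv (deriv h) Lsec < 0)
    (hApos : 0 < A Lsec) (hDdec : deriv D Lsec < 0)
    (hcos : Real.cos (σ₀ - φ) = -1) :
    ∃ ε₀ > (0:ℝ), ∃ c > (0:ℝ), ∃ C > (0:ℝ),
      ∀ ε : ℝ, 0 < ε → ε < ε₀ → ∀ η : ℝ, 0 < η → η < c * ε →
        ∃ σd Ld : ℝ,
          deriv h Ld + ε * deriv A Ld * Real.cos (σd - φ) = 0 ∧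
          ε * A Ld * Real.sin (σd - φ) - η * D Ld = 0 ∧
          |Ld - Lsec| ≤ C * ε ∧ |σd - σ₀| ≤ C * η / ε ∧
          ∀ JD : Matrix (Fin 2) (Fin 2) ℝ,
            JD = !![deriv (fun σ => deriv h Ld + ε * deriv A Ld * Real.cos (σ - φ)) σd,
                    deriv (fun L => deriv h L + ε * deriv A L * Real.cos (σd - φ)) Ld;
                    deriv (fun σ => ε * A Ld * Real.sin (σ - φ) - η * D Ld) σd,
                    deriv (fun L => ε * A L * Real.sin (σd - φ) - η * D L) Ld] →
            JD.det < 0 ∧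
            ∃ x y : ℝ, 0 < x ∧ y < 0 ∧ spectrum ℝ JD = {x, y} :=
  dissipative_saddle_remains_saddle_general h A D Lsec σ₀ φ hh hA hD hcrit hconc hApos hcos
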